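/- Let S be a nonempty finite set, let δ ∈ (0,1], and let a : S × S → ℝ satisfy δ ≤ a(i,j) ≤ 1 for all i,j ∈ S. Let f : S → ℝ be nonnegative with Σ_{j∈S} f(j) > 0, and let p, q : S → ℝ be nonnegative with Σ_{i∈S} p(i) = Σ_{i∈S} q(i) = 1. Then the sums Σ_{i,j∈S} f(j) a(i,j) p(i) and Σ_{i,j∈S} f(j) a(i,j) q(i) are strictly positive and |log(Σ_{i,j∈S} f(j) a(i,j) p(i)) − log(Σ_{i,j∈S} f(j) a(i,j) q(i))| ≤ δ^{-1} Σ_{i∈S} |p(i) − q(i)|. -/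

import Mathlib

/-!
With `F = ∑ j, f j`, every row sum `∑ j, f j * a i j` lies in `[δ F, F]`. Averaging the rows
against `p` or `q` therefore gives two numbers that are at least `δ F` and differ by at most
`F ∑ i, |p i - q i|`; since `log` is `(δ F)⁻¹`-Lipschitz on `[δ F, ∞)`, the factor `F` cancels.
-/

open Finset

namespace Real

theorem abs_log_sub_log_le_abs_sub_div {x y m : ℝ} (hm : 0 < m) (hx : m ≤ x) (hy : m ≤ y) :
    |log x - log y| ≤ |x - y| / m := by
  wlog hyx : y ≤ x generalizing x y
  · rw [abs_sub_comm, abs_sub_comm x]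
    exact this hy hx (le_of_not_ge hyx)
  have hy0 : 0 < y := hm.trans_le hy
  rw [abs_of_nonneg (sub_nonneg.2 (log_le_log hy0 hyx)), abs_of_nonneg (sub_nonneg.2 hyx)]
  calc log x - log y = log (x / y) := (log_div (hy0.trans_le hyx).ne' hy0.ne').symm
    _ ≤ x / y - 1 := log_le_sub_one_of_pos (div_pos (hy0.trans_le hyx) hy0)
    _ = (x - y) / y := by field_simp
    _ ≤ (x - y) / m := div_le_div_of_nonneg_left (sub_nonneg.2 hyx) hm hy

end Real

section WeightedSums

variable {ι : Type*} [Fintype ι]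

theorem le_sum_mul_of_forall_le {g r : ι → ℝ} {c : ℝ} (hg : ∀ i, c ≤ g i)
    (hr : ∀ i, 0 ≤ r i) (hrsum : ∑ i, r i = 1) : c ≤ ∑ i, g i * r i :=
  calc c = ∑ i, c * r i := by rw [← mul_sum, hrsum, mul_one]
    _ ≤ ∑ i, g i * r i := sum_le_sum fun i _ => mul_le_mul_of_nonneg_right (hg i) (hr i)

theorem abs_sum_mul_sub_sum_mul_le {g p q : ι → ℝ} {M : ℝ} (hg : ∀ i, |g i| ≤ M) :
    |∑ i, g i * p i - ∑ i, g i * q i| ≤ M * ∑ i, |p i - q i| := by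
  simp only [← sum_sub_distrib, ← mul_sub, mul_sum]
  refine (abs_sum_le_sum_abs _ _).trans (sum_le_sum fun i _ => ?_)
  rw [abs_mul]
  exact mul_le_mul_of_nonneg_right (hg i) (abs_nonneg _)

end WeightedSums

theorem abs_log_sub_log_le_of_probability_vectors_general
    {S : Type*} [Fintype S]
    (δ : ℝ) (hδ0 : 0 < δ)
    (a : S → S → ℝ) (ha : ∀ i j, δ ≤ a i j ∧ a i j ≤ 1)
    (f : S → ℝ) (hf : ∀ j, 0 ≤ f j) (hfpos : 0 < ∑ j, f j)
    (p q : S → ℝ) (hp : ∀ i, 0 ≤ p i) (hq : ∀ i, 0 ≤ q i)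
    (hpsum : ∑ i, p i = 1) (hqsum : ∑ i, q i = 1) :
    0 < ∑ i, ∑ j, f j * a i j * p i ∧
    0 < ∑ i, ∑ j, f j * a i j * q i ∧
    |Real.log (∑ i, ∑ j, f j * a i j * p i) - Real.log (∑ i, ∑ j, f j * a i j * q i)|
      ≤ δ⁻¹ * ∑ i, |p i - q i| := by
  set F := ∑ j, f j
  simp only [← sum_mul]
  have hδF : 0 < δ * F := mul_pos hδ0 hfpos
  have hrow_ge : ∀ i, δ * F ≤ ∑ j, f j * a i j := fun i => by
    rw [mul_sum]
    exact sum_le_sum fun j _ => by rw [mul_comm]; exact mul_le_mul_of_nonneg_left (ha i j).1 (hf j)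
  have hrow_le : ∀ i, |∑ j, f j * a i j| ≤ F := fun i => by
    rw [abs_of_nonneg (hδF.le.trans (hrow_ge i))]
    exact sum_le_sum fun j _ => mul_le_of_le_one_right (hf j) (ha i j).2
  have hpF := le_sum_mul_of_forall_le hrow_ge hp hpsum
  have hqF := le_sum_mul_of_forall_le hrow_ge hq hqsum
  refine ⟨hδF.trans_le hpF, hδF.trans_le hqF, ?_⟩
  calc _ ≤ |∑ i, (∑ j, f j * a i j) * p i - ∑ i, (∑ j, f j * a i j) * q i| / (δ * F) :=
        Real.abs_log_sub_log_le_abs_sub_div hδF hpF hqF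
    _ ≤ (F * ∑ i, |p i - q i|) / (δ * F) := by
        gcongr
        exact abs_sum_mul_sub_sum_mul_le hrow_le
    _ = δ⁻¹ * ∑ i, |p i - q i| := by field_simp

/-- **Core estimate in the proof of Lemma 2.1 (filter forgetting bound).**
For a finite set `S`, transition weights `a i j ∈ [δ, 1]` with `δ ∈ (0,1]`, a nonnegative
function `f` with positive total mass, and two probability vectors `p, q` on `S`, both
sums `Σ_{i,j} f j * a i j * p i` and `Σ_{i,j} f j * a i j * q i` are strictly positive and
`|log Σ_{i,j} f j * a i j * p i − log Σ_{i,j} f j * a i j * q i| ≤ δ⁻¹ * Σ_i |p i − q i|`. -/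
theorem abs_log_sub_log_le_of_probability_vectors
    {S : Type*} [Fintype S] [Nonempty S]
    (δ : ℝ) (hδ0 : 0 < δ) (hδ1 : δ ≤ 1)
    (a : S → S → ℝ) (ha : ∀ i j, δ ≤ a i j ∧ a i j ≤ 1)
    (f : S → ℝ) (hf : ∀ j, 0 ≤ f j) (hfpos : 0 < ∑ j, f j)
    (p q : S → ℝ) (hp : ∀ i, 0 ≤ p i) (hq : ∀ i, 0 ≤ q i)
    (hpsum : ∑ i, p i = 1) (hqsum : ∑ i, q i = 1) :
    0 < ∑ i, ∑ j, f j * a i j * p i ∧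
    0 < ∑ i, ∑ j, f j * a i j * q i ∧
    |Real.log (∑ i, ∑ j, f j * a i j * p i) - Real.log (∑ i, ∑ j, f j * a i j * q i)|
      ≤ δ⁻¹ * ∑ i, |p i - q i| :=
  abs_log_sub_log_le_of_probability_vectors_general δ hδ0 a ha f hf hfpos p q hp hq hpsum hqsum
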